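/- arXiv:0705.2976 — 4 statements merged into one kernel-verified Lean document; each statement's English description precedes it below -/
import Mathlib

section
/- For a nondecreasing q with q(r) strictly increasing eventually (q not truncated), the function Q(ξ,i) = Σ_{r≥i} q(r) e^{-ξ} ξ^{r-i}/(r-i)! is strictly increasing in ξ on its domain of convergence and strictly increasing in i, provided all values are finite. -/
/-!
`Q(ξ, i)` is the expectation of `q (i + N)` for `N` Poisson with rate `ξ`. Since
`Po(r + t) = Po(r) ∗ Po(t)`, raising the rate from `r` to `r + t` replaces `q (i + N)` by
`q (i + N + N')` with `N'` an independent `Po(t)` variable; monotonicity of `q` gives `≤`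
pointwise, and the event `N = 0, N' = n` (positive probability when `t > 0`) with
`q i < q (i + n)` makes it strict. Raising `i` to `i + 1` is a pointwise comparison, strict at
one atom. Working with `ℝ≥0∞`-valued integrals removes all summability bookkeeping.
-/

open Real Nat MeasureTheory ProbabilityTheory
open scoped NNReal ENNReal

lemma lintegral_lt_lintegral_of_le_of_lt {α : Type*} [MeasurableSpace α]
    [DiscreteMeasurableSpace α] {μ : Measure α} {f g : α → ℝ≥0∞} (hf : ∫⁻ x, f x ∂μ ≠ ∞)
    (hfg : f ≤ g) {a : α} (ha : μ {a} ≠ 0) (hlt : f a < g a) :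
    ∫⁻ x, f x ∂μ < ∫⁻ x, g x ∂μ :=
  lintegral_strict_mono_of_ae_le_of_ae_lt_on Measurable.of_discrete.aemeasurable hf
    (ae_of_all _ hfg) ha (ae_of_all _ fun _ hx => (Set.mem_singleton_iff.1 hx) ▸ hlt)

namespace ProbabilityTheory

lemma poissonMeasure_singleton_zero_ne_zero (r : ℝ≥0) : poissonMeasure r {0} ≠ 0 := by
  rw [poissonMeasure_singleton]
  exact (ENNReal.ofReal_pos.2 (by positivity)).ne'

lemma poissonMeasure_singleton_ne_zero {r : ℝ≥0} (n : ℕ) (hr : 0 < r) :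
    poissonMeasure r {n} ≠ 0 := by
  rw [poissonMeasure_singleton]
  exact (ENNReal.ofReal_pos.2 (by positivity)).ne'

lemma lintegral_poissonMeasure_add (f : ℕ → ℝ≥0∞) (r t : ℝ≥0) :
    ∫⁻ n, f n ∂poissonMeasure (r + t) =
      ∫⁻ a, ∫⁻ b, f (a + b) ∂poissonMeasure t ∂poissonMeasure r := by
  rw [← poissonMeasure_conv_poissonMeasure, Measure.lintegral_conv .of_discrete]

lemma lintegral_poissonMeasure_lt_of_lt {f : ℕ → ℝ≥0∞} (hf : Monotone f) {n : ℕ}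
    (hn : f 0 < f n) {r s : ℝ≥0} (hrs : r < s) (hs : ∫⁻ k, f k ∂poissonMeasure s ≠ ∞) :
    ∫⁻ k, f k ∂poissonMeasure r < ∫⁻ k, f k ∂poissonMeasure s := by
  obtain ⟨t, ht, rfl⟩ : ∃ t, 0 < t ∧ s = r + t := ⟨s - r, tsub_pos_of_lt hrs, by
    rw [add_tsub_cancel_of_le hrs.le]⟩
  set g : ℕ → ℝ≥0∞ := fun a => ∫⁻ b, f (a + b) ∂poissonMeasure t
  have hfg : f ≤ g := fun a => calc
    f a = ∫⁻ _, f a ∂poissonMeasure t := by simp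
    _ ≤ g a := lintegral_mono fun b => hf (Nat.le_add_right a b)
  have h0 : f 0 < g 0 := calc
    f 0 = ∫⁻ _, f 0 ∂poissonMeasure t := by simp
    _ < ∫⁻ b, f b ∂poissonMeasure t :=
      lintegral_lt_lintegral_of_le_of_lt (by simp [ne_top_of_lt hn])
        (fun b => hf b.zero_le) (poissonMeasure_singleton_ne_zero n ht) hn
    _ = g 0 := by simp only [g, zero_add]
  rw [lintegral_poissonMeasure_add] at hs ⊢
  exact lintegral_lt_lintegral_of_le_of_lt (ne_top_of_le_ne_top hs (lintegral_mono hfg)) hfg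
    (poissonMeasure_singleton_zero_ne_zero r) h0

lemma lintegral_poissonMeasure_lt_of_le_of_lt {f g : ℕ → ℝ≥0∞} (hfg : f ≤ g) {n : ℕ}
    (hn : f n < g n) {r : ℝ≥0} (hr : 0 < r) (hg : ∫⁻ k, g k ∂poissonMeasure r ≠ ∞) :
    ∫⁻ k, f k ∂poissonMeasure r < ∫⁻ k, g k ∂poissonMeasure r :=
  lintegral_lt_lintegral_of_le_of_lt (ne_top_of_le_ne_top hg (lintegral_mono hfg)) hfg
    (poissonMeasure_singleton_ne_zero n hr) hn

lemma lintegral_poissonMeasure_eq_tsum (f : ℕ → ℝ≥0) (r : ℝ≥0) :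
    ∫⁻ n, (f n : ℝ≥0∞) ∂poissonMeasure r =
      ∑' n, ENNReal.ofReal (f n * exp (-r) * r ^ n / n !) := by
  rw [lintegral_countable']
  refine tsum_congr fun n => ?_
  rw [poissonMeasure_singleton, ← ENNReal.ofReal_coe_nnreal, ← ENNReal.ofReal_mul (by positivity)]
  ring_nf

/-- Holds also when the series diverges: then both sides are junk `0`. -/
lemma tsum_mul_exp_neg_mul_pow_div_factorial (f : ℕ → ℝ≥0) (r : ℝ≥0) :
    ∑' n, (f n : ℝ) * exp (-r) * r ^ n / n ! =
      (∫⁻ n, (f n : ℝ≥0∞) ∂poissonMeasure r).toReal := by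
  rw [lintegral_poissonMeasure_eq_tsum, ENNReal.tsum_toReal_eq fun _ => ENNReal.ofReal_ne_top]
  exact tsum_congr fun n => (ENNReal.toReal_ofReal (by positivity)).symm

lemma lintegral_poissonMeasure_ne_top {f : ℕ → ℝ≥0} {r : ℝ≥0}
    (h : Summable fun n => (f n : ℝ) * r ^ n / n !) :
    ∫⁻ n, (f n : ℝ≥0∞) ∂poissonMeasure r ≠ ∞ := by
  rw [lintegral_poissonMeasure_eq_tsum, ← ENNReal.ofReal_tsum_of_nonneg (fun _ => by positivity)
    ((h.mul_left (exp (-r))).congr fun n => by ring)]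
  exact ENNReal.ofReal_ne_top

end ProbabilityTheory

/-- If `q` is nondecreasing and not eventually constant, then
`Q(ξ,i) = ∑_{r≥i} q(r) e^{-ξ} ξ^{r-i}/(r-i)!` is strictly increasing in `ξ` and strictly
increasing in `i`, provided the relevant series converge. -/
theorem stmt3 (q : ℕ → NNReal) (hq : Monotone q)
    (hnt : ∀ m : ℕ, ∃ r ≥ m, q r < q (r + 1))
    (Q : ℝ → ℕ → ℝ)
    (hQ : ∀ ξ i, Q ξ i = ∑' k : ℕ, (q (i + k) : ℝ) * Real.exp (-ξ) * ξ ^ k / k !) :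
    (∀ i : ℕ, 1 ≤ i → ∀ x y : ℝ, 0 ≤ x → x < y →
      (Summable fun k : ℕ => (q (i + k) : ℝ) * y ^ k / k !) → Q x i < Q y i) ∧
    (∀ i : ℕ, 1 ≤ i → ∀ x : ℝ, 0 < x →
      (Summable fun k : ℕ => (q (i + 1 + k) : ℝ) * x ^ k / k !) → Q x i < Q x (i + 1)) := by
  have hQ' (ξ : ℝ≥0) (i : ℕ) : Q ξ i = (∫⁻ k, (q (i + k) : ℝ≥0∞) ∂poissonMeasure ξ).toReal := by
    rw [hQ, tsum_mul_exp_neg_mul_pow_div_factorial]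
  constructor
  · intro i _ x y hx hxy hsum
    lift x to ℝ≥0 using hx
    lift y to ℝ≥0 using x.coe_nonneg.trans hxy.le
    have hfin := lintegral_poissonMeasure_ne_top hsum
    obtain ⟨r, hri, hr⟩ := hnt i
    have hjump : q (i + 0) < q (i + (r + 1 - i)) := by
      rw [show i + (r + 1 - i) = r + 1 by omega]
      exact (hq (by omega)).trans_lt hr
    rw [hQ', hQ']
    exact ENNReal.toReal_strict_mono hfin (lintegral_poissonMeasure_lt_of_lt
      (fun a b hab => ENNReal.coe_le_coe.2 (hq (by omega))) (ENNReal.coe_lt_coe.2 hjump) hxy hfin)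
  · intro i _ x hx hsum
    lift x to ℝ≥0 using hx.le
    have hfin := lintegral_poissonMeasure_ne_top hsum
    obtain ⟨r, hri, hr⟩ := hnt i
    have hjump : q (i + (r - i)) < q (i + 1 + (r - i)) := by
      rwa [show i + (r - i) = r by omega, show i + 1 + (r - i) = r + 1 by omega]
    rw [hQ', hQ']
    exact ENNReal.toReal_strict_mono hfin (lintegral_poissonMeasure_lt_of_le_of_lt
      (fun k => ENNReal.coe_le_coe.2 (hq (by omega))) (ENNReal.coe_lt_coe.2 hjump)
      (NNReal.coe_pos.1 hx) hfin)
end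

section
/- Among nondecreasing threshold functions f: [0,1) → ℝ≥0 with F(t) = ∫_0^t f(s) ds satisfying F(0)=0 and F(1)=∞, the minimal value of the functional J(f) = (ℓ+1)^{-1} ∫_0^1 e^{-F(t)} f(t)^{ℓ+1} dt is (ℓ+1)^ℓ, attained by f(t) = (ℓ+1)/(1-t). -/
/-!
Write `p = ℓ + 1`, `F t = ∫₀ᵗ f` and `φ = e^{-F/p} f`. Off the countably many jumps of `f`, `φ` is
the derivative of `-p e^{-F/p}`, so `∫₀ᵇ φ = p (1 - e^{-F(b)/p}) → p` as `b → 1⁻`. Jensen's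
inequality on the unit interval then gives `∫₀¹ e^{-F} f^p = ∫₀¹ φ^p ≥ (∫₀¹ φ)^p ≥ p^p`, that is
`J f ≥ p^{p-1}`. For `f t = p / (1 - t)` one has `e^{-F(t)} = (1 - t)^p`, so the integrand of `J`
is the constant `p^p`.
-/

open Real MeasureTheory Set Filter Topology

theorem integral_exp_neg_primitive_div_mul {g : ℝ → ℝ} (hg : Monotone g) {a : ℝ} (ha : a ≠ 0)
    {c b : ℝ} (hcb : c ≤ b) :
    ∫ x in c..b, exp (-(∫ s in c..x, g s) / a) * g x
      = a * (1 - exp (-(∫ s in c..b, g s) / a)) := by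
  set P : ℝ → ℝ := fun x => ∫ s in c..x, g s
  have hP : Continuous P :=
    intervalIntegral.continuous_primitive (fun _ _ => hg.intervalIntegrable) c
  have hderiv : ∀ x ∈ Ioo c b \ {x | ¬ContinuousAt g x},
      HasDerivAt (fun x => -a * exp (-P x / a)) (exp (-P x / a) * g x) x := by
    rintro x ⟨-, hx⟩
    have hPx : HasDerivAt P (g x) x :=
      intervalIntegral.integral_hasDerivAt_right hg.intervalIntegrable
        hg.measurable.stronglyMeasurable.stronglyMeasurableAtFilter (not_not.mp hx)
    refine ((hPx.neg.div_const a).exp.const_mul (-a)).congr_deriv ?_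
    simp only [Pi.neg_apply]
    field_simp
  have hint : IntervalIntegrable (fun x => exp (-P x / a) * g x) volume c b :=
    hg.intervalIntegrable.continuousOn_mul (by fun_prop)
  rw [integral_eq_of_hasDerivAt_off_countable_of_le _ _ hcb hg.countable_not_continuousAt
    (by fun_prop) hderiv hint]
  simp only [P, intervalIntegral.integral_same, neg_zero, zero_div, exp_zero]
  ring

theorem lintegral_Ioc_exp_neg_primitive_div_mul {f : ℝ → ℝ} {c b : ℝ} (hcb : c ≤ b)
    (hmono : MonotoneOn f (Icc c b)) (hpos : ∀ t ∈ Icc c b, 0 ≤ f t) {a : ℝ} (ha : a ≠ 0) :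
    ∫⁻ t in Ioc c b, ENNReal.ofReal (exp (-(∫ s in c..t, f s) / a) * f t)
      = ENNReal.ofReal (a * (1 - exp (-(∫ s in c..b, f s) / a))) := by
  set g := IccExtend hcb ((Icc c b).domRestrict f)
  have hg : Monotone g := (monotoneOn_iff_monotone.mp hmono).IccExtend hcb
  have hgf : EqOn g f (Icc c b) := fun x hx => IccExtend_of_mem hcb _ hx
  have hprim : ∀ x ∈ Icc c b, ∫ s in c..x, g s = ∫ s in c..x, f s := fun x hx =>
    intervalIntegral.integral_congr fun s hs =>
      hgf (Icc_subset_Icc le_rfl hx.2 (uIcc_of_le hx.1 ▸ hs))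
  have hP : Continuous fun x => ∫ s in c..x, g s :=
    intervalIntegral.continuous_primitive (fun _ _ => hg.intervalIntegrable) c
  have hint : IntegrableOn (fun x => exp (-(∫ s in c..x, g s) / a) * g x) (Ioc c b) :=
    (intervalIntegrable_iff_integrableOn_Ioc_of_le hcb).mp
      (hg.intervalIntegrable.continuousOn_mul (by fun_prop))
  calc ∫⁻ t in Ioc c b, ENNReal.ofReal (exp (-(∫ s in c..t, f s) / a) * f t)
      = ∫⁻ t in Ioc c b, ENNReal.ofReal (exp (-(∫ s in c..t, g s) / a) * g t) :=
        setLIntegral_congr_fun measurableSet_Ioc fun t ht => by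
          rw [hgf (Ioc_subset_Icc_self ht), hprim t (Ioc_subset_Icc_self ht)]
    _ = ENNReal.ofReal (∫ t in c..b, exp (-(∫ s in c..t, g s) / a) * g t) := by
        rw [intervalIntegral.integral_of_le hcb, ofReal_integral_eq_lintegral_ofReal hint]
        refine ae_restrict_of_forall_mem measurableSet_Ioc fun t ht => ?_
        simp only [Pi.zero_apply, hgf (Ioc_subset_Icc_self ht)]
        exact mul_nonneg (exp_nonneg _) (hpos t (Ioc_subset_Icc_self ht))
    _ = ENNReal.ofReal (a * (1 - exp (-(∫ s in c..b, f s) / a))) := by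
        rw [integral_exp_neg_primitive_div_mul hg ha hcb, hprim b (right_mem_Icc.mpr hcb)]

theorem ofReal_le_lintegral_exp_neg_primitive_div_mul {f : ℝ → ℝ} {c d : ℝ} (hcd : c < d)
    (hmono : MonotoneOn f (Ico c d)) (hpos : ∀ t ∈ Ico c d, 0 ≤ f t)
    (htop : Tendsto (fun t => ∫ s in c..t, f s) (𝓝[<] d) atTop) {a : ℝ} (ha : 0 < a) :
    ENNReal.ofReal a ≤ ∫⁻ t in Ioo c d, ENNReal.ofReal (exp (-(∫ s in c..t, f s) / a) * f t) := by
  have hexp : Tendsto (fun b => exp (-(∫ s in c..b, f s) / a)) (𝓝[<] d) (𝓝 0) :=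
    tendsto_exp_atBot.comp ((tendsto_neg_atTop_atBot.comp htop).atBot_div_const ha)
  have hlim : Tendsto (fun b => ENNReal.ofReal (a * (1 - exp (-(∫ s in c..b, f s) / a))))
      (𝓝[<] d) (𝓝 (ENNReal.ofReal a)) := by
    simpa using ENNReal.tendsto_ofReal ((hexp.const_sub 1).const_mul a)
  refine le_of_tendsto hlim ?_
  filter_upwards [Ioo_mem_nhdsLT hcd] with b hb
  have hsub : Icc c b ⊆ Ico c d := Icc_subset_Ico_right hb.2
  rw [← lintegral_Ioc_exp_neg_primitive_div_mul hb.1.le (hmono.mono hsub)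
    (fun t ht => hpos t (hsub ht)) ha.ne']
  exact lintegral_mono_set (Ioc_subset_Ioo_right hb.2)

theorem monotoneOn_primitive_of_nonneg {f : ℝ → ℝ} {c d : ℝ} (hpos : ∀ t ∈ Ico c d, 0 ≤ f t)
    (hint : ∀ t ∈ Ico c d, IntervalIntegrable f volume c t) :
    MonotoneOn (fun t => ∫ s in c..t, f s) (Ico c d) := fun _ hs t ht hst =>
  intervalIntegral.integral_mono_interval le_rfl hs.1 hst
    (ae_restrict_of_forall_mem measurableSet_Ioc fun x hx =>
      hpos x ⟨hx.1.le, hx.2.trans_lt ht.2⟩) (hint t ht)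

theorem rpow_lintegral_le_lintegral_rpow {α : Type*} [MeasurableSpace α] {μ : Measure α}
    [IsProbabilityMeasure μ] {φ : α → ENNReal} (hφ : AEMeasurable φ μ) {p : ℝ} (hp : 1 ≤ p) :
    (∫⁻ x, φ x ∂μ) ^ p ≤ ∫⁻ x, φ x ^ p ∂μ := by
  rcases hp.eq_or_lt with rfl | hp
  · simp
  have holder := ENNReal.lintegral_mul_le_Lp_mul_Lq μ (HolderConjugate.conjExponent hp) hφ
    aemeasurable_const (g := 1)
  simp only [Pi.mul_apply, Pi.one_apply, mul_one, ENNReal.one_rpow, lintegral_const,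
    measure_univ] at holder
  rwa [one_div, ENNReal.le_rpow_inv_iff (by linarith)] at holder

theorem ofReal_rpow_self_le_lintegral_exp_neg_primitive_mul_rpow {f : ℝ → ℝ}
    (hmono : MonotoneOn f (Ico 0 1)) (hpos : ∀ t ∈ Ico (0:ℝ) 1, 0 ≤ f t)
    (hint : ∀ t ∈ Ico (0:ℝ) 1, IntervalIntegrable f volume 0 t)
    (htop : Tendsto (fun t => ∫ s in (0:ℝ)..t, f s) (𝓝[<] 1) atTop) {p : ℝ} (hp : 1 ≤ p) :
    ENNReal.ofReal (p ^ p)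
      ≤ ∫⁻ t in Ioo (0:ℝ) 1, ENNReal.ofReal (exp (-∫ s in (0:ℝ)..t, f s) * f t ^ p) := by
  have hp0 : 0 < p := by linarith
  have : IsProbabilityMeasure (volume.restrict (Ioo (0:ℝ) 1)) := ⟨by simp⟩
  set φ := fun t => ENNReal.ofReal (exp (-(∫ s in (0:ℝ)..t, f s) / p) * f t)
  have hφ : AEMeasurable φ (volume.restrict (Ioo 0 1)) := by
    have hF := aemeasurable_restrict_of_monotoneOn (μ := volume) measurableSet_Ioo
      ((monotoneOn_primitive_of_nonneg hpos hint).mono Ioo_subset_Ico_self)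
    have hf := aemeasurable_restrict_of_monotoneOn (μ := volume) measurableSet_Ioo
      (hmono.mono Ioo_subset_Ico_self)
    exact ENNReal.measurable_ofReal.comp_aemeasurable ((hF.neg.div_const p).exp.mul hf)
  have hφ_rpow : ∀ t ∈ Ioo (0:ℝ) 1,
      φ t ^ p = ENNReal.ofReal (exp (-∫ s in (0:ℝ)..t, f s) * f t ^ p) := fun t ht => by
    have hft := hpos t (Ioo_subset_Ico_self ht)
    rw [ENNReal.ofReal_rpow_of_nonneg (by positivity) hp0.le, mul_rpow (exp_nonneg _) hft,
      ← exp_mul, div_mul_cancel₀ _ hp0.ne']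
  calc ENNReal.ofReal (p ^ p) = ENNReal.ofReal p ^ p :=
        (ENNReal.ofReal_rpow_of_nonneg hp0.le hp0.le).symm
    _ ≤ (∫⁻ t in Ioo (0:ℝ) 1, φ t) ^ p := ENNReal.rpow_le_rpow
        (ofReal_le_lintegral_exp_neg_primitive_div_mul one_pos hmono hpos htop hp0) hp0.le
    _ ≤ ∫⁻ t in Ioo (0:ℝ) 1, φ t ^ p := rpow_lintegral_le_lintegral_rpow hφ hp
    _ = _ := setLIntegral_congr_fun measurableSet_Ioo hφ_rpow

theorem integral_div_one_sub (c : ℝ) {t : ℝ} (ht : t < 1) :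
    ∫ s in (0:ℝ)..t, c / (1 - s) = -(c * log (1 - t)) := by
  simp only [div_eq_mul_inv, intervalIntegral.integral_const_mul,
    intervalIntegral.integral_comp_sub_left (fun x => x⁻¹), sub_zero]
  rw [integral_inv_of_pos (sub_pos.mpr ht) one_pos, log_div one_ne_zero (sub_pos.mpr ht).ne',
    log_one]
  ring

theorem exp_neg_integral_div_one_sub_mul_rpow {a t : ℝ} (ha : 0 ≤ a) (ht : t < 1) :
    exp (-∫ s in (0:ℝ)..t, a / (1 - s)) * (a / (1 - t)) ^ a = a ^ a := by
  have h1t : 0 < 1 - t := sub_pos.mpr ht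
  rw [integral_div_one_sub a ht, neg_neg, mul_comm a, ← rpow_def_of_pos h1t, div_rpow ha h1t.le]
  field_simp

theorem inv_ofReal_mul_ofReal_rpow_add_one {a : ℝ} (ha : 0 < a) (b : ℝ) :
    (ENNReal.ofReal a)⁻¹ * ENNReal.ofReal (a ^ (b + 1)) = ENNReal.ofReal (a ^ b) := by
  rw [rpow_add_one ha.ne', ENNReal.ofReal_mul (rpow_nonneg ha.le b), mul_comm, mul_assoc,
    ENNReal.mul_inv_cancel (ENNReal.ofReal_pos.mpr ha).ne' ENNReal.ofReal_ne_top, mul_one]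

/-- Among nondecreasing nonnegative thresholds `f` on `[0,1)` with `F(t)=∫_0^t f` satisfying
`F(1⁻)=∞`, the minimal value of `J(f) = (ℓ+1)⁻¹ ∫_0^1 e^{-F(t)} f(t)^{ℓ+1} dt` is `(ℓ+1)^ℓ`,
attained by `f(t) = (ℓ+1)/(1-t)`. -/
theorem stmt4 (ℓ : ℝ) (hℓ : 0 < ℓ)
    (J : (ℝ → ℝ) → ENNReal)
    (hJ : ∀ f : ℝ → ℝ, J f = (ENNReal.ofReal (ℓ + 1))⁻¹ *
        ∫⁻ t in Ioo (0 : ℝ) 1,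
          ENNReal.ofReal (Real.exp (-(∫ s in (0:ℝ)..t, f s)) * (f t) ^ (ℓ + 1))) :
    (∀ f : ℝ → ℝ, MonotoneOn f (Ico 0 1) → (∀ t ∈ Ico (0:ℝ) 1, 0 ≤ f t) →
        (∀ t ∈ Ico (0:ℝ) 1, IntervalIntegrable f volume 0 t) →
        Tendsto (fun t => ∫ s in (0:ℝ)..t, f s) (nhdsWithin 1 (Iio 1)) atTop →
        ENNReal.ofReal ((ℓ + 1) ^ ℓ) ≤ J f) ∧
    J (fun t => (ℓ + 1) / (1 - t)) = ENNReal.ofReal ((ℓ + 1) ^ ℓ) := by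
  have hvalue := inv_ofReal_mul_ofReal_rpow_add_one (by linarith : 0 < ℓ + 1) ℓ
  refine ⟨fun f hmono hpos hint htop => ?_, ?_⟩
  · rw [hJ, ← hvalue]
    exact mul_le_mul_right
      (ofReal_rpow_self_le_lintegral_exp_neg_primitive_mul_rpow hmono hpos hint htop
        (by linarith)) _
  · rw [hJ, setLIntegral_congr_fun measurableSet_Ioo fun t ht =>
      by rw [exp_neg_integral_div_one_sub_mul_rpow (by linarith) ht.2],
      setLIntegral_const, volume_Ioo]
    simpa using hvalue
end

section
/- If q: ℕ → ℝ≥0 satisfies q(r) ≤ c·exp(r^β) for constants c > 0 and 0 < β < 1, then Q(x,1) = Σ_{r≥1} q(r) e^{-x} x^{r-1}/(r-1)! is finite for all x ≥ 0 and Q(x,1) = O(exp(x^β')) as x → ∞ for every β' ∈ (β,1). -/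
/-!
Since `t ↦ t ^ β` is sublinear, `(1 + k) ^ β ≤ x ^ β + x ^ (β - 1) (1 + k)` for every `x > 0`.
Hence `q (1 + k) ≤ c e^{x ^ β + s} e^{s k}` with `s = x ^ (β - 1)`, and the Poisson moment generating
function `E[e^{s N}] = exp (x (e^s - 1)) ≤ exp (2 x s) = exp (2 x ^ β)` for `x ≥ 1` gives
`Q(x,1) ≤ c e · exp (3 x ^ β)`, which is `O(exp (x ^ β'))` for `β' > β`.
-/

open Real Nat

lemma rpow_le_rpow_add_rpow_sub_one_mul {β t y : ℝ} (hβ0 : 0 ≤ β) (hβ1 : β ≤ 1) (ht : 0 ≤ t)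
    (hy : 0 < y) : t ^ β ≤ y ^ β + y ^ (β - 1) * t := by
  rcases le_total t y with hty | hyt
  · have := rpow_le_rpow ht hty hβ0
    have : 0 ≤ y ^ (β - 1) * t := by positivity
    linarith
  · have ht0 : t ≠ 0 := (hy.trans_le hyt).ne'
    calc t ^ β = t ^ (β - 1) * t := by rw [rpow_sub_one ht0, div_mul_cancel₀ _ ht0]
      _ ≤ y ^ (β - 1) * t :=
        mul_le_mul_of_nonneg_right (rpow_le_rpow_of_nonpos hy hyt (by linarith)) ht
      _ ≤ y ^ β + y ^ (β - 1) * t := le_add_of_nonneg_left (by positivity)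

lemma mul_rpow_le_rpow_of_le {a β β' x : ℝ} (ha : 0 ≤ a) (hβ0 : 0 ≤ β) (hββ' : β < β')
    (hx : a ^ (β' - β)⁻¹ ≤ x) : a * x ^ β ≤ x ^ β' := by
  have hd : 0 < β' - β := sub_pos.mpr hββ'
  have hx0 : 0 ≤ x := (rpow_nonneg ha _).trans hx
  have ha_le : a ≤ x ^ (β' - β) := by
    calc a = (a ^ (β' - β)⁻¹) ^ (β' - β) := by rw [← rpow_mul ha, inv_mul_cancel₀ hd.ne', rpow_one]
      _ ≤ x ^ (β' - β) := rpow_le_rpow (rpow_nonneg ha _) hx hd.le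
  calc a * x ^ β ≤ x ^ (β' - β) * x ^ β := mul_le_mul_of_nonneg_right ha_le (by positivity)
    _ = x ^ β' := by rw [← rpow_add' hx0 (by linarith), sub_add_cancel]

lemma hasSum_poisson_mul_exp_pow (x s : ℝ) :
    HasSum (fun k : ℕ => exp (-x) * x ^ k / k ! * exp s ^ k) (exp (x * (exp s - 1))) := by
  have := (NormedSpace.expSeries_div_hasSum_exp (x * exp s)).mul_left (exp (-x))
  rw [← exp_eq_exp_ℝ, ← exp_add] at this
  rw [show x * (exp s - 1) = -x + x * exp s by ring]
  refine this.congr_fun fun k => ?_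
  rw [mul_pow]; ring

section SubexponentialGrowth

variable {q : ℕ → NNReal} {c β : ℝ}

lemma coe_apply_one_add_le (hc : 0 ≤ c) (hβ0 : 0 ≤ β) (hβ1 : β ≤ 1)
    (hgrowth : ∀ r : ℕ, (q r : ℝ) ≤ c * exp ((r : ℝ) ^ β)) {y : ℝ} (hy : 0 < y) (k : ℕ) :
    (q (1 + k) : ℝ) ≤ c * exp (y ^ β + y ^ (β - 1)) * exp (y ^ (β - 1)) ^ k := by
  calc (q (1 + k) : ℝ) ≤ c * exp (((1 + k : ℕ) : ℝ) ^ β) := hgrowth _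
    _ ≤ c * exp (y ^ β + y ^ (β - 1) * (1 + k)) := by
      gcongr
      exact_mod_cast rpow_le_rpow_add_rpow_sub_one_mul hβ0 hβ1 (by positivity) hy
    _ = c * exp (y ^ β + y ^ (β - 1)) * exp (y ^ (β - 1)) ^ k := by
      rw [← exp_nat_mul, mul_assoc, ← exp_add]; ring_nf

lemma poisson_term_le (hc : 0 ≤ c) (hβ0 : 0 ≤ β) (hβ1 : β ≤ 1)
    (hgrowth : ∀ r : ℕ, (q r : ℝ) ≤ c * exp ((r : ℝ) ^ β)) {x y : ℝ} (hx : 0 ≤ x) (hy : 0 < y)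
    (k : ℕ) :
    (q (1 + k) : ℝ) * exp (-x) * x ^ k / k ! ≤
      c * exp (y ^ β + y ^ (β - 1)) * (exp (-x) * x ^ k / k ! * exp (y ^ (β - 1)) ^ k) := by
  calc (q (1 + k) : ℝ) * exp (-x) * x ^ k / k ! = (q (1 + k) : ℝ) * (exp (-x) * x ^ k / k !) := by
        ring
    _ ≤ c * exp (y ^ β + y ^ (β - 1)) * exp (y ^ (β - 1)) ^ k * (exp (-x) * x ^ k / k !) := by
        gcongr; exact coe_apply_one_add_le hc hβ0 hβ1 hgrowth hy k
    _ = _ := by ring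

lemma summable_poisson_term (hc : 0 ≤ c) (hβ0 : 0 ≤ β) (hβ1 : β ≤ 1)
    (hgrowth : ∀ r : ℕ, (q r : ℝ) ≤ c * exp ((r : ℝ) ^ β)) {x : ℝ} (hx : 0 ≤ x) :
    Summable fun k : ℕ => (q (1 + k) : ℝ) * exp (-x) * x ^ k / k ! :=
  .of_nonneg_of_le (fun k => by positivity) (poisson_term_le hc hβ0 hβ1 hgrowth hx one_pos)
    ((hasSum_poisson_mul_exp_pow x _).summable.mul_left _)

lemma tsum_poisson_term_le (hc : 0 ≤ c) (hβ0 : 0 ≤ β) (hβ1 : β ≤ 1)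
    (hgrowth : ∀ r : ℕ, (q r : ℝ) ≤ c * exp ((r : ℝ) ^ β)) {x : ℝ} (hx : 1 ≤ x) :
    ∑' k : ℕ, (q (1 + k) : ℝ) * exp (-x) * x ^ k / k ! ≤ c * exp (1 + 3 * x ^ β) := by
  have hx0 : 0 < x := one_pos.trans_le hx
  set s := x ^ (β - 1) with hs
  have hs0 : 0 ≤ s := by positivity
  have hs1 : s ≤ 1 := rpow_le_one_of_one_le_of_nonpos hx (by linarith)
  have hxs : x * s = x ^ β := by rw [hs, rpow_sub_one hx0.ne', mul_div_cancel₀ _ hx0.ne']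
  have hmgf : x * (exp s - 1) ≤ 2 * x ^ β := by
    have := (abs_le.mp (abs_exp_sub_one_le (abs_le.mpr ⟨by linarith, hs1⟩))).2
    rw [abs_of_nonneg hs0] at this
    nlinarith
  calc ∑' k : ℕ, (q (1 + k) : ℝ) * exp (-x) * x ^ k / k !
      ≤ ∑' k : ℕ, c * exp (x ^ β + s) * (exp (-x) * x ^ k / k ! * exp s ^ k) :=
        (summable_poisson_term hc hβ0 hβ1 hgrowth hx0.le).tsum_le_tsum
          (poisson_term_le hc hβ0 hβ1 hgrowth hx0.le hx0)
          ((hasSum_poisson_mul_exp_pow x s).summable.mul_left _)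
    _ = c * exp (x ^ β + s + x * (exp s - 1)) := by
        rw [tsum_mul_left, (hasSum_poisson_mul_exp_pow x s).tsum_eq, mul_assoc, ← exp_add]
    _ ≤ c * exp (1 + 3 * x ^ β) := by gcongr c * exp ?_; linarith

end SubexponentialGrowth

theorem stmt10_general (q : ℕ → NNReal) (c : ℝ) (hc : 0 < c)
    (β : ℝ) (hβ : β ∈ Set.Ioo (0:ℝ) 1)
    (hgrowth : ∀ r : ℕ, (q r : ℝ) ≤ c * Real.exp ((r : ℝ) ^ β)) :
    (∀ x : ℝ, 0 ≤ x →
        Summable fun k : ℕ => (q (1 + k) : ℝ) * Real.exp (-x) * x ^ k / k !) ∧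
    (∀ β' ∈ Set.Ioo β 1, ∃ C > (0:ℝ), ∃ x₀ : ℝ, ∀ x ≥ x₀,
        (∑' k : ℕ, (q (1 + k) : ℝ) * Real.exp (-x) * x ^ k / k !)
          ≤ C * Real.exp (x ^ β')) := by
  obtain ⟨hβ0, hβ1⟩ := hβ
  refine ⟨fun x hx => summable_poisson_term hc.le hβ0.le hβ1.le hgrowth hx, ?_⟩
  rintro β' ⟨hββ', -⟩
  refine ⟨c * exp 1, by positivity, max 1 (3 ^ (β' - β)⁻¹), fun x hx => ?_⟩
  calc ∑' k : ℕ, (q (1 + k) : ℝ) * exp (-x) * x ^ k / k !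
      ≤ c * exp (1 + 3 * x ^ β) :=
        tsum_poisson_term_le hc.le hβ0.le hβ1.le hgrowth (le_of_max_le_left hx)
    _ ≤ c * exp (1 + x ^ β') := by
        gcongr; exact mul_rpow_le_rpow_of_le (by norm_num) hβ0.le hββ' (le_of_max_le_right hx)
    _ = c * exp 1 * exp (x ^ β') := by rw [exp_add, mul_assoc]

/-- If `q(r) ≤ c exp(r^β)` with `c > 0`, `0 < β < 1`, then
`Q(x,1) = ∑_{r≥1} q(r) e^{-x} x^{r-1}/(r-1)!` is finite for all `x ≥ 0`, and
`Q(x,1) = O(exp(x^{β'}))` as `x → ∞` for every `β' ∈ (β,1)`. -/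
theorem stmt10 (q : ℕ → NNReal) (hq : Monotone q) (c : ℝ) (hc : 0 < c)
    (β : ℝ) (hβ : β ∈ Set.Ioo (0:ℝ) 1)
    (hgrowth : ∀ r : ℕ, (q r : ℝ) ≤ c * Real.exp ((r : ℝ) ^ β)) :
    (∀ x : ℝ, 0 ≤ x →
        Summable fun k : ℕ => (q (1 + k) : ℝ) * Real.exp (-x) * x ^ k / k !) ∧
    (∀ β' ∈ Set.Ioo β 1, ∃ C > (0:ℝ), ∃ x₀ : ℝ, ∀ x ≥ x₀,
        (∑' k : ℕ, (q (1 + k) : ℝ) * Real.exp (-x) * x ^ k / k !)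
          ≤ C * Real.exp (x ^ β')) :=
  stmt10_general q c hc β hβ hgrowth
end

section
/- Let f(t) = (1-t)^{-α} for t ∈ [0,1) with α > 1. Then exp(-∫_0^t f(s) ds) = exp(-((1-t)^{1-α} - 1)/(α-1)), and ∫_0^1 exp(-∫_0^t f(s) ds) · (∫_0^{f(t)} exp(x^β) dx) dt < ∞ whenever α > 1/(1-β) and 0 < β < 1. -/
/-!
The primitive of `(1 - s)^{-α}` is explicit. In the variable `u = (1 - t)⁻¹` the integrand
becomes `exp(-(u^{α-1} - 1)/(α-1)) ∫_0^{u^α} exp(x^β) dx`, which is at most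
`e^{1/(α-1)} u^α exp(u^{αβ} - u^{α-1}/(α-1))`. Since `α > 1/(1-β)` means `αβ < α - 1`, the
negative term in the exponent dominates and the integrand tends to `0` as `t → 1`. Being
continuous on `[0, 1)` with a limit at `1`, it is integrable on `(0, 1)`.
-/

open Real Set MeasureTheory Filter Topology

theorem integral_one_sub_rpow_neg {α t : ℝ} (hα : α ≠ 1) (ht : t < 1) :
    ∫ s in (0:ℝ)..t, (1 - s) ^ (-α) = ((1 - t) ^ (1 - α) - 1) / (α - 1) := by
  have h0 : (0:ℝ) ∉ uIcc (1 - t) 1 := by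
    intro h
    rcases mem_uIcc.mp h with h | h <;> linarith [h.1, h.2]
  rw [intervalIntegral.integral_comp_sub_left (fun x => x ^ (-α)), sub_zero,
    integral_rpow (Or.inr ⟨neg_injective.ne hα, h0⟩), one_rpow, show -α + 1 = 1 - α by ring]
  have h1 : α - 1 ≠ 0 := sub_ne_zero.mpr hα
  have h2 : 1 - α ≠ 0 := sub_ne_zero.mpr hα.symm
  field_simp
  ring

theorem continuous_exp_rpow {β : ℝ} (hβ : 0 ≤ β) : Continuous fun x : ℝ => exp (x ^ β) :=
  continuous_exp.comp (continuous_id.rpow_const fun _ => Or.inr hβ)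

theorem integral_exp_rpow_le {β r : ℝ} (hβ : 0 ≤ β) (hr : 0 ≤ r) :
    ∫ x in (0:ℝ)..r, exp (x ^ β) ≤ r * exp (r ^ β) := by
  calc ∫ x in (0:ℝ)..r, exp (x ^ β) ≤ ∫ _ in (0:ℝ)..r, exp (r ^ β) := by
        refine intervalIntegral.integral_mono_on hr ?_ intervalIntegrable_const fun x hx => ?_
        · exact (continuous_exp_rpow hβ).intervalIntegrable _ _
        · exact exp_le_exp.mpr (rpow_le_rpow hx.1 hx.2 hβ)
    _ = r * exp (r ^ β) := by simp

theorem continuousOn_exp_mul_integral_exp_rpow (α : ℝ) {β : ℝ} (hβ : 0 ≤ β) :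
    ContinuousOn (fun u => exp (-((u ^ (α - 1) - 1) / (α - 1))) *
      ∫ x in (0:ℝ)..u ^ α, exp (x ^ β)) (Ioi 0) := by
  have hrpow (p : ℝ) : ContinuousOn (fun u : ℝ => u ^ p) (Ioi 0) :=
    continuousOn_id.rpow_const fun u hu => Or.inl (ne_of_gt hu)
  have hprimitive : Continuous fun r => ∫ x in (0:ℝ)..r, exp (x ^ β) :=
    intervalIntegral.continuous_primitive (continuous_exp_rpow hβ).intervalIntegrable 0
  exact (continuous_exp.comp_continuousOn
    (((hrpow _).sub continuousOn_const).div_const _).neg).mul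
      (hprimitive.comp_continuousOn (hrpow α))

theorem tendsto_mul_log_add_rpow_sub_mul_rpow_atBot (p : ℝ) {q γ c : ℝ} (hγ : 0 < γ)
    (hq : q < γ) (hc : 0 < c) :
    Tendsto (fun u => p * log u + (u ^ q - c * u ^ γ)) atTop atBot := by
  have hfactor : Tendsto (fun u => p * (log u / u ^ γ) + (u ^ (q - γ) - c)) atTop
      (𝓝 (p * 0 + (0 - c))) :=
    ((isLittleO_log_rpow_atTop hγ).tendsto_div_nhds_zero.const_mul p).add
      (((tendsto_rpow_neg_atTop (sub_pos.mpr hq)).congr fun u => by rw [neg_sub]).sub_const c)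
  refine ((tendsto_rpow_atTop hγ).atTop_mul_neg (by linarith) hfactor).congr' ?_
  filter_upwards [eventually_gt_atTop 0] with u hu
  have : u ^ γ ≠ 0 := (rpow_pos_of_pos hu γ).ne'
  rw [rpow_sub hu]
  field_simp

theorem tendsto_rpow_mul_exp_sub_mul_rpow_atTop (p : ℝ) {q γ c : ℝ} (hγ : 0 < γ)
    (hq : q < γ) (hc : 0 < c) :
    Tendsto (fun u => u ^ p * exp (u ^ q - c * u ^ γ)) atTop (𝓝 0) := by
  refine (tendsto_exp_atBot.comp
    (tendsto_mul_log_add_rpow_sub_mul_rpow_atBot p hγ hq hc)).congr' ?_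
  filter_upwards [eventually_gt_atTop 0] with u hu
  rw [Function.comp_apply, exp_add, rpow_def_of_pos hu p, mul_comm p]

theorem tendsto_exp_mul_integral_exp_rpow_atTop {α β : ℝ} (hα : 1 < α) (hβ : 0 ≤ β)
    (hαβ : α * β < α - 1) :
    Tendsto (fun u => exp (-((u ^ (α - 1) - 1) / (α - 1))) * ∫ x in (0:ℝ)..u ^ α, exp (x ^ β))
      atTop (𝓝 0) := by
  have hα1 : 0 < α - 1 := sub_pos.mpr hα
  have hmajor := (tendsto_rpow_mul_exp_sub_mul_rpow_atTop α hα1 hαβ (inv_pos.mpr hα1)).const_mul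
    (exp (α - 1)⁻¹)
  rw [mul_zero] at hmajor
  refine tendsto_of_tendsto_of_tendsto_of_le_of_le' tendsto_const_nhds hmajor ?_ ?_
  · filter_upwards [eventually_ge_atTop 0] with u hu
    exact mul_nonneg (exp_pos _).le
      (intervalIntegral.integral_nonneg (rpow_nonneg hu α) fun x _ => (exp_pos _).le)
  · filter_upwards [eventually_gt_atTop 0] with u hu
    calc _ ≤ exp (-((u ^ (α - 1) - 1) / (α - 1))) * (u ^ α * exp ((u ^ α) ^ β)) :=
          mul_le_mul_of_nonneg_left (integral_exp_rpow_le hβ (rpow_nonneg hu.le α))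
            (exp_pos _).le
      _ = exp (α - 1)⁻¹ * (u ^ α * exp (u ^ (α * β) - (α - 1)⁻¹ * u ^ (α - 1))) := by
          rw [← rpow_mul hu.le, mul_left_comm, ← exp_add, mul_left_comm (exp _), ← exp_add]
          congr 2
          field_simp
          ring

theorem integrableOn_Ioo_of_tendsto {E : Type*} [NormedAddCommGroup E] {μ : Measure ℝ}
    [IsLocallyFiniteMeasure μ] {g : ℝ → E} {a b : ℝ} {la lb : E}
    (hg : ContinuousOn g (Ioo a b)) (ha : Tendsto g (𝓝[>] a) (𝓝 la))
    (hb : Tendsto g (𝓝[<] b) (𝓝 lb)) : IntegrableOn g (Ioo a b) μ :=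
  ((continuousOn_Icc_extendFrom_Ioo hg ha hb).integrableOn_Icc.mono_set
    Ioo_subset_Icc_self).congr_fun (extendFrom_extends hg) measurableSet_Ioo

theorem tendsto_one_sub_inv_nhdsLT_one : Tendsto (fun t : ℝ => (1 - t)⁻¹) (𝓝[<] 1) atTop := by
  refine tendsto_inv_nhdsGT_zero.comp
    (tendsto_nhdsWithin_of_tendsto_nhds_of_eventually_within _ ?_ ?_)
  · exact ((continuous_sub_left 1).tendsto' 1 0 (sub_self 1)).mono_left nhdsWithin_le_nhds
  · filter_upwards [self_mem_nhdsWithin] with t ht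
    exact sub_pos.mpr (mem_Iio.mp ht)

/-- For `f(t) = (1-t)^{-α}` on `[0,1)` with `α > 1`:
`exp(-∫_0^t f) = exp(-((1-t)^{1-α} - 1)/(α-1))`, and if moreover `α > 1/(1-β)` with
`0 < β < 1` then `∫_0^1 exp(-∫_0^t f) (∫_0^{f(t)} exp(x^β) dx) dt < ∞`. -/
theorem stmt11 (α β : ℝ) (hα : 1 < α) (hβ : β ∈ Ioo (0:ℝ) 1)
    (f : ℝ → ℝ) (hf : ∀ t, f t = (1 - t) ^ (-α)) :
    (∀ t ∈ Ico (0:ℝ) 1,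
        Real.exp (-(∫ s in (0:ℝ)..t, f s))
          = Real.exp (-(((1 - t) ^ (1 - α) - 1) / (α - 1)))) ∧
    ((1 : ℝ) / (1 - β) < α →
      IntegrableOn
        (fun t => Real.exp (-(∫ s in (0:ℝ)..t, f s)) *
          ∫ x in (0:ℝ)..(f t), Real.exp (x ^ β))
        (Ioo (0:ℝ) 1) volume) := by
  obtain ⟨hβ0, hβ1⟩ := hβ
  obtain rfl : f = fun t => (1 - t) ^ (-α) := funext hf
  have hintegral (t : ℝ) (ht : t < 1) := integral_one_sub_rpow_neg hα.ne' ht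
  refine ⟨fun t ht => by rw [hintegral t ht.2], fun hαβ => ?_⟩
  have hαβ' : α * β < α - 1 := by
    rw [div_lt_iff₀ (sub_pos.mpr hβ1)] at hαβ
    linarith
  set H := fun u => exp (-((u ^ (α - 1) - 1) / (α - 1))) * ∫ x in (0:ℝ)..u ^ α, exp (x ^ β)
  have hcont : ContinuousOn (fun t => H (1 - t)⁻¹) (Iio 1) :=
    (continuousOn_exp_mul_integral_exp_rpow α hβ0.le).comp
      ((continuous_sub_left 1).continuousOn.inv₀ fun t ht => (sub_pos.mpr ht).ne')
      fun t ht => mem_Ioi.mpr (inv_pos.mpr (sub_pos.mpr ht))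
  have hlim0 : Tendsto (fun t => H (1 - t)⁻¹) (𝓝[>] 0) (𝓝 (H (1 - 0)⁻¹)) :=
    (hcont.continuousAt (Iio_mem_nhds one_pos)).tendsto.mono_left nhdsWithin_le_nhds
  have hlim1 : Tendsto (fun t => H (1 - t)⁻¹) (𝓝[<] 1) (𝓝 0) :=
    (tendsto_exp_mul_integral_exp_rpow_atTop hα hβ0.le hαβ').comp tendsto_one_sub_inv_nhdsLT_one
  refine (integrableOn_Ioo_of_tendsto (hcont.mono Ioo_subset_Iio_self) hlim0 hlim1).congr_fun
    (fun t ht => ?_) measurableSet_Ioo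
  have h1t : 0 < 1 - t := sub_pos.mpr ht.2
  simp only [H, hintegral t ht.2, inv_rpow h1t.le, ← rpow_neg h1t.le, neg_sub]
end
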